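/- arXiv:2605.14383 — 5 statements merged into one kernel-verified Lean document; each statement's English description precedes it below -/
import Mathlib

section
/- Let 0 < R < π. The infimum of the scale-invariant resistance R₁[u] = 2π ∫₀^R sin θ / (1 + u'(θ)²) dθ over all continuously differentiable functions u : [0,R] → ℝ with u ≥ 0 and u(R) = 0 equals 0, and the infimum is not attained: every such u satisfies R₁[u] > 0, while the radial cones u_k(θ) = k(R−θ) satisfy R₁[u_k] = 2π(1−cos R)/(1+k²) → 0 as k → ∞. -/
open Real Filter Set

/-- The scale-invariant resistance of the rotationally symmetric radial graph
`ρ(θ) = exp (u θ)`, `θ ∈ [0,R]`: `R₁[u] = 2π ∫₀ᴿ sin θ / (1 + u'(θ)²) dθ`. -/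
noncomputable def res1 (R : ℝ) (u : ℝ → ℝ) : ℝ :=
  2 * π * ∫ θ in (0:ℝ)..R, Real.sin θ / (1 + (deriv u θ) ^ 2)

/-- Continuously differentiable profiles on `[0,R]` with `u ≥ 0` and `u(R) = 0`. -/
def Admissible1 (R : ℝ) (u : ℝ → ℝ) : Prop :=
  ContDiffOn ℝ 1 u (Set.Icc 0 R) ∧ (∀ θ ∈ Set.Icc 0 R, 0 ≤ u θ) ∧ u R = 0

open intervalIntegral MeasureTheory

lemma aux_integrable (R : ℝ) (u : ℝ → ℝ) :
    IntervalIntegrable (fun θ => Real.sin θ / (1 + (deriv u θ) ^ 2)) volume 0 R := by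
  have hm : Measurable (fun θ => Real.sin θ / (1 + (deriv u θ) ^ 2)) :=
    Real.measurable_sin.div (measurable_const.add ((measurable_deriv u).pow_const 2))
  refine (_root_.intervalIntegrable_const (c := (1:ℝ))).mono_fun hm.aestronglyMeasurable ?_
  filter_upwards with θ
  have h1 : (1:ℝ) ≤ 1 + (deriv u θ)^2 := by nlinarith [sq_nonneg (deriv u θ)]
  simp only [Real.norm_eq_abs, abs_div, abs_one]
  rw [abs_of_pos (by linarith : (0:ℝ) < 1 + (deriv u θ)^2)]
  calc |Real.sin θ| / (1 + (deriv u θ)^2) ≤ 1 / 1 := by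
        apply div_le_div₀ (by norm_num) (abs_sin_le_one θ) one_pos h1
    _ = 1 := by norm_num

lemma aux_pos (R : ℝ) (hR0 : 0 < R) (hRpi : R < π) (u : ℝ → ℝ) : 0 < res1 R u := by
  have := intervalIntegral.intervalIntegral_pos_of_pos_on (aux_integrable R u)
    (fun x hx => by
      have hs : 0 < Real.sin x := Real.sin_pos_of_pos_of_lt_pi hx.1 (hx.2.trans hRpi)
      positivity) hR0
  have hpi := Real.pi_pos
  unfold res1
  positivity

lemma aux_cone (R : ℝ) (k : ℝ) :
    res1 R (fun θ => k * (R - θ)) = 2 * π * (1 - Real.cos R) / (1 + k ^ 2) := by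
  have hd : deriv (fun θ : ℝ => k * (R - θ)) = fun _ => -k := by
    ext θ
    have : HasDerivAt (fun θ : ℝ => k * (R - θ)) (-k) θ := by
      simpa using ((hasDerivAt_id θ).const_sub R).const_mul k
    exact this.deriv
  have hk : (0:ℝ) < 1 + k^2 := by nlinarith [sq_nonneg k]
  unfold res1
  rw [hd]
  have : (∫ θ in (0:ℝ)..R, Real.sin θ / (1 + k ^ 2)) = (1 - Real.cos R) / (1 + k^2) := by
    rw [intervalIntegral.integral_div, integral_sin]
    norm_num
  simp only [neg_sq] at this ⊢
  rw [this]; ring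

theorem stmt_0 (R : ℝ) (hR0 : 0 < R) (hRpi : R < π) :
    IsGLB {r : ℝ | ∃ u : ℝ → ℝ, Admissible1 R u ∧ r = res1 R u} 0 ∧
    (∀ u : ℝ → ℝ, Admissible1 R u → 0 < res1 R u) ∧
    (∀ k : ℝ, res1 R (fun θ => k * (R - θ)) = 2 * π * (1 - Real.cos R) / (1 + k ^ 2)) ∧
    Tendsto (fun k : ℝ => 2 * π * (1 - Real.cos R) / (1 + k ^ 2)) atTop (nhds 0) := by
  have htend : Tendsto (fun k : ℝ => 2 * π * (1 - Real.cos R) / (1 + k ^ 2)) atTop (nhds 0) := by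
    apply Tendsto.div_atTop (tendsto_const_nhds)
    exact tendsto_atTop_add_const_left _ 1 (tendsto_pow_atTop two_ne_zero)
  have hadm : ∀ k : ℝ, 0 ≤ k → Admissible1 R (fun θ => k * (R - θ)) := by
    intro k hk
    refine ⟨(contDiff_const.mul (contDiff_const.sub contDiff_id)).contDiffOn, ?_, by simp⟩
    intro θ hθ
    have := hθ.2
    simp only []
    nlinarith
  refine ⟨⟨?_, ?_⟩, fun u _ => aux_pos R hR0 hRpi u, aux_cone R, htend⟩
  · rintro r ⟨u, hu, rfl⟩
    exact (aux_pos R hR0 hRpi u).le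
  · intro b hb
    refine ge_of_tendsto htend ?_
    filter_upwards [eventually_ge_atTop (0:ℝ)] with k hk
    have : (2 * π * (1 - Real.cos R) / (1 + k ^ 2)) ∈
        {r : ℝ | ∃ u : ℝ → ℝ, Admissible1 R u ∧ r = res1 R u} :=
      ⟨_, hadm k hk, (aux_cone R k).symm⟩
    exact hb this
end

section
/- For p ∈ ℝ² (the Euclidean plane with the standard inner product), consider the quadratic form Q_p(ξ) = ‖ξ‖² − 4⟨p,ξ⟩²/(1 + ‖p‖²) arising as the principal symbol of the radial Newton resistance operator. Then: (i) for every ξ, Q_p(ξ) ≥ ‖ξ‖²(1 − 3‖p‖²)/(1 + ‖p‖²), with equality when ξ = p; (ii) if ‖p‖² < 1/3 then Q_p(ξ) > 0 for every ξ ≠ 0 (strong ellipticity); (iii) if ‖p‖² ≥ 1/3 and p ≠ 0 then Q_p(p) ≤ 0, so ellipticity is lost. -/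
open Real

/-- Ellipticity analysis of the principal symbol
`Q_p(ξ) = ‖ξ‖² − 4⟨p,ξ⟩²/(1 + ‖p‖²)` of the radial Newton resistance operator:
(i) lower bound `Q_p(ξ) ≥ ‖ξ‖²(1 − 3‖p‖²)/(1 + ‖p‖²)` with equality at `ξ = p`;
(ii) strong ellipticity when `‖p‖² < 1/3`;
(iii) loss of ellipticity when `‖p‖² ≥ 1/3`, `p ≠ 0`. -/
theorem stmt_4 (p : EuclideanSpace ℝ (Fin 2)) :
    (∀ ξ : EuclideanSpace ℝ (Fin 2),
      ‖ξ‖ ^ 2 * (1 - 3 * ‖p‖ ^ 2) / (1 + ‖p‖ ^ 2) ≤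
        ‖ξ‖ ^ 2 - 4 * (inner ℝ p ξ : ℝ) ^ 2 / (1 + ‖p‖ ^ 2)) ∧
    (‖p‖ ^ 2 - 4 * (inner ℝ p p : ℝ) ^ 2 / (1 + ‖p‖ ^ 2) =
      ‖p‖ ^ 2 * (1 - 3 * ‖p‖ ^ 2) / (1 + ‖p‖ ^ 2)) ∧
    (‖p‖ ^ 2 < 1 / 3 → ∀ ξ : EuclideanSpace ℝ (Fin 2), ξ ≠ 0 →
      0 < ‖ξ‖ ^ 2 - 4 * (inner ℝ p ξ : ℝ) ^ 2 / (1 + ‖p‖ ^ 2)) ∧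
    (1 / 3 ≤ ‖p‖ ^ 2 → p ≠ 0 →
      ‖p‖ ^ 2 - 4 * (inner ℝ p p : ℝ) ^ 2 / (1 + ‖p‖ ^ 2) ≤ 0) := by
  have hpos : (0:ℝ) < 1 + ‖p‖ ^ 2 := by positivity
  have key : ∀ ξ : EuclideanSpace ℝ (Fin 2),
      ‖ξ‖ ^ 2 * (1 - 3 * ‖p‖ ^ 2) / (1 + ‖p‖ ^ 2) ≤
        ‖ξ‖ ^ 2 - 4 * (inner ℝ p ξ : ℝ) ^ 2 / (1 + ‖p‖ ^ 2) := by
    intro ξ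
    have hcs : (inner ℝ p ξ : ℝ) ^ 2 ≤ ‖p‖ ^ 2 * ‖ξ‖ ^ 2 := by
      have := abs_real_inner_le_norm p ξ
      calc (inner ℝ p ξ : ℝ) ^ 2 = |(inner ℝ p ξ : ℝ)| ^ 2 := (sq_abs _).symm
        _ ≤ (‖p‖ * ‖ξ‖) ^ 2 := by
            apply pow_le_pow_left₀ (abs_nonneg _) this
        _ = ‖p‖ ^ 2 * ‖ξ‖ ^ 2 := by ring
    rw [div_le_iff₀ hpos, sub_mul, div_mul_cancel₀ _ (ne_of_gt hpos)]
    nlinarith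
  have heq : ‖p‖ ^ 2 - 4 * (inner ℝ p p : ℝ) ^ 2 / (1 + ‖p‖ ^ 2) =
      ‖p‖ ^ 2 * (1 - 3 * ‖p‖ ^ 2) / (1 + ‖p‖ ^ 2) := by
    rw [real_inner_self_eq_norm_sq]
    field_simp
    ring
  refine ⟨key, heq, ?_, ?_⟩
  · intro hp ξ hξ
    have hξn : (0:ℝ) < ‖ξ‖ ^ 2 := by
      have : ‖ξ‖ ≠ 0 := norm_ne_zero_iff.mpr hξ
      positivity
    have := key ξ
    have h1 : 0 < ‖ξ‖ ^ 2 * (1 - 3 * ‖p‖ ^ 2) / (1 + ‖p‖ ^ 2) := by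
      apply div_pos _ hpos
      nlinarith
    linarith
  · intro hp hpne
    rw [heq]
    apply div_nonpos_of_nonpos_of_nonneg _ (le_of_lt hpos)
    have : (0:ℝ) ≤ ‖p‖ ^ 2 := by positivity
    nlinarith
end

section
/- Fix H > 0. For ε > 0, the incompressible-flow resistance of the narrow radial cone of angular radius ε and height H, given by R(ε) = 2π ε³ ( e^{−2H} ε + 2H sin ε − ε cos ε ) / (4H⁴ + 5H²ε² + ε⁴), satisfies the asymptotic law lim_{ε→0⁺} R(ε)/ε⁴ = π (2H + e^{−2H} − 1)/(2H⁴). -/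
open Real Filter Set

lemma tendsto_sin_div_self : Tendsto (fun x : ℝ => Real.sin x / x) (nhdsWithin 0 (Set.Ioi 0)) (nhds 1) := by
  have h := (Real.hasDerivAt_sin 0)
  rw [hasDerivAt_iff_tendsto_slope] at h
  simp only [Real.cos_zero] at h
  have := h.mono_left (nhdsWithin_mono _ (fun x hx => ne_of_gt hx : Set.Ioi (0:ℝ) ⊆ {0}ᶜ))
  refine this.congr (fun x => ?_)
  simp [slope_def_field, div_eq_inv_mul]

/-- Asymptotics of the incompressible-flow resistance
`R(ε) = 2πε³(e^{−2H}ε + 2H sin ε − ε cos ε)/(4H⁴ + 5H²ε² + ε⁴)` of the narrow radial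
cone of angular radius `ε` and height `H`: `R(ε)/ε⁴ → π(2H + e^{−2H} − 1)/(2H⁴)`
as `ε → 0⁺`. -/
theorem stmt_15 (H : ℝ) (hH : 0 < H) :
    Tendsto (fun ε : ℝ =>
        (2 * π * ε ^ 3 * (Real.exp (-2 * H) * ε + 2 * H * Real.sin ε - ε * Real.cos ε) /
          (4 * H ^ 4 + 5 * H ^ 2 * ε ^ 2 + ε ^ 4)) / ε ^ 4)
      (nhdsWithin 0 (Set.Ioi 0))
      (nhds (π * (2 * H + Real.exp (-2 * H) - 1) / (2 * H ^ 4))) := by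
  have hD : ∀ ε : ℝ, (0:ℝ) < 4 * H ^ 4 + 5 * H ^ 2 * ε ^ 2 + ε ^ 4 := by
    intro ε
    have : (0:ℝ) < 4 * H ^ 4 := by positivity
    nlinarith [sq_nonneg ε, sq_nonneg (ε^2), sq_nonneg (H*ε)]
  have key : Tendsto (fun ε : ℝ =>
      2 * π * (Real.exp (-2 * H) + 2 * H * (Real.sin ε / ε) - Real.cos ε) /
        (4 * H ^ 4 + 5 * H ^ 2 * ε ^ 2 + ε ^ 4))
      (nhdsWithin 0 (Set.Ioi 0))
      (nhds (π * (2 * H + Real.exp (-2 * H) - 1) / (2 * H ^ 4))) := by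
    have hnum : Tendsto (fun ε : ℝ =>
        2 * π * (Real.exp (-2 * H) + 2 * H * (Real.sin ε / ε) - Real.cos ε))
        (nhdsWithin 0 (Set.Ioi 0)) (nhds (2 * π * (Real.exp (-2 * H) + 2 * H * 1 - 1))) := by
      apply Tendsto.const_mul
      have hcos : Tendsto (fun ε : ℝ => Real.cos ε) (nhdsWithin 0 (Set.Ioi 0)) (nhds 1) := by
        have := (Real.continuous_cos.tendsto 0).mono_left (nhdsWithin_le_nhds (s := Set.Ioi 0))
        simpa using this
      exact (tendsto_const_nhds.add ((tendsto_sin_div_self).const_mul (2*H))).sub hcos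
    have hden : Tendsto (fun ε : ℝ => 4 * H ^ 4 + 5 * H ^ 2 * ε ^ 2 + ε ^ 4)
        (nhdsWithin 0 (Set.Ioi 0)) (nhds (4 * H ^ 4)) := by
      have : Continuous (fun ε : ℝ => 4 * H ^ 4 + 5 * H ^ 2 * ε ^ 2 + ε ^ 4) := by continuity
      have := (this.tendsto 0).mono_left (nhdsWithin_le_nhds (s := Set.Ioi 0))
      simpa using this
    have := hnum.div hden (by positivity)
    convert this using 2
    · rfl
    field_simp
    ring
  refine key.congr' ?_
  filter_upwards [self_mem_nhdsWithin] with ε (hε : 0 < ε)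
  have hεne : ε ≠ 0 := ne_of_gt hε
  have hDne := (hD ε).ne'
  field_simp
end

section
/- Let δ > 0 and let u : [0,δ) → ℝ be twice continuously differentiable with u'(0) = 0, with 1 − 3u'(θ)² ≠ 0 on [0,δ), and satisfying on (0,δ) the rotationally symmetric Euler–Lagrange equation of the incompressible source flow model: u''(θ) + (cos θ/sin θ) · u'(θ) · (1 + u'(θ)²)/(1 − 3u'(θ)²) = (1 + u'(θ)²)(u'(θ)² − 1)/(1 − 3u'(θ)²). Then necessarily u''(0) = −1/2. -/
open Real Filter Set Topology

/-- If `u` is twice continuously differentiable on `[0,δ)` (with first and second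
derivatives `u'` and `u''` in the sense of one-sided derivatives within `[0,δ)`),
satisfies `u'(0) = 0` and `1 − 3u'(θ)² ≠ 0` on `[0,δ)`, and solves on `(0,δ)` the
rotationally symmetric Euler–Lagrange equation of the incompressible source flow
model, then necessarily `u''(0) = −1/2`. -/
theorem stmt_16 (δ : ℝ) (hδ : 0 < δ) (u u' u'' : ℝ → ℝ)
    (hd1 : ∀ θ ∈ Set.Ico 0 δ, HasDerivWithinAt u (u' θ) (Set.Ico 0 δ) θ)
    (hd2 : ∀ θ ∈ Set.Ico 0 δ, HasDerivWithinAt u' (u'' θ) (Set.Ico 0 δ) θ)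
    (hcont : ContinuousOn u'' (Set.Ico 0 δ))
    (hu'0 : u' 0 = 0)
    (hne : ∀ θ ∈ Set.Ico 0 δ, 1 - 3 * u' θ ^ 2 ≠ 0)
    (heq : ∀ θ ∈ Set.Ioo 0 δ,
      u'' θ + (Real.cos θ / Real.sin θ) * u' θ * ((1 + u' θ ^ 2) / (1 - 3 * u' θ ^ 2)) =
        (1 + u' θ ^ 2) * (u' θ ^ 2 - 1) / (1 - 3 * u' θ ^ 2)) :
    u'' 0 = -(1 / 2) := by
  have h0 : (0:ℝ) ∈ Set.Ico 0 δ := ⟨le_refl _, hδ⟩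
  have hIoo : Set.Ico 0 δ \ {0} = Set.Ioo 0 δ := by
    ext x
    simp only [Set.mem_diff, Set.mem_Ico, Set.mem_Ioo, Set.mem_singleton_iff]
    constructor
    · rintro ⟨⟨h1, h2⟩, h3⟩; exact ⟨h1.lt_of_ne (Ne.symm h3), h2⟩
    · rintro ⟨h1, h2⟩; exact ⟨⟨h1.le, h2⟩, h1.ne'⟩
  haveI : (𝓝[Set.Ioo 0 δ] (0:ℝ)).NeBot := by
    apply mem_closure_iff_nhdsWithin_neBot.mp
    rw [closure_Ioo hδ.ne]
    exact ⟨le_refl _, hδ.le⟩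
  -- slope of u' tends to u'' 0
  have hslope : Tendsto (slope u' 0) (𝓝[Set.Ioo 0 δ] 0) (𝓝 (u'' 0)) := by
    have := hasDerivWithinAt_iff_tendsto_slope.mp (hd2 0 h0)
    rwa [hIoo] at this
  -- slope of sin tends to 1
  have hsin : Tendsto (slope Real.sin 0) (𝓝[Set.Ioo 0 δ] 0) (𝓝 1) := by
    have h := (Real.hasDerivAt_sin 0).hasDerivWithinAt (s := Set.Ioo 0 δ)
    have h2 := hasDerivWithinAt_iff_tendsto_slope.mp h
    rw [Set.diff_singleton_eq_self (by simp)] at h2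
    simpa using h2
  -- θ / sin θ tends to 1
  have hts : Tendsto (fun θ => θ / Real.sin θ) (𝓝[Set.Ioo 0 δ] 0) (𝓝 1) := by
    have h := hsin.inv₀ one_ne_zero
    rw [inv_one] at h
    refine h.congr' ?_
    filter_upwards [self_mem_nhdsWithin] with θ hθ
    have hθ0 : θ ≠ 0 := (hθ.1).ne'
    rw [slope_def_field]
    simp [Real.sin_zero, inv_div]
  -- u' tends to 0
  have hT1 : Tendsto u' (𝓝[Set.Ioo 0 δ] 0) (𝓝 0) := by
    have := ((hd2 0 h0).continuousWithinAt).tendsto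
    rw [hu'0] at this
    exact this.mono_left (nhdsWithin_mono _ Set.Ioo_subset_Ico_self)
  -- u'' tends to u'' 0
  have hT2 : Tendsto u'' (𝓝[Set.Ioo 0 δ] 0) (𝓝 (u'' 0)) := by
    have := (hcont 0 h0).tendsto
    exact this.mono_left (nhdsWithin_mono _ Set.Ioo_subset_Ico_self)
  -- cos tends to 1
  have hcos : Tendsto Real.cos (𝓝[Set.Ioo 0 δ] 0) (𝓝 1) := by
    have := (Real.continuous_cos.tendsto 0)
    rw [Real.cos_zero] at this
    exact this.mono_left nhdsWithin_le_nhds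
  -- u'^2 tends to 0
  have hsq : Tendsto (fun θ => u' θ ^ 2) (𝓝[Set.Ioo 0 δ] 0) (𝓝 0) := by
    have := hT1.pow 2
    simpa using this
  -- (cos θ / sin θ) * u' θ tends to u'' 0
  have hA : Tendsto (fun θ => Real.cos θ / Real.sin θ * u' θ) (𝓝[Set.Ioo 0 δ] 0)
      (𝓝 (u'' 0)) := by
    have h := (hcos.mul hts).mul hslope
    rw [one_mul, one_mul] at h
    refine h.congr' ?_
    filter_upwards [self_mem_nhdsWithin] with θ hθ
    have hθ0 : θ ≠ 0 := (hθ.1).ne'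
    rw [slope_def_field, hu'0]
    by_cases hs : Real.sin θ = 0
    · simp [hs]
    · field_simp
      ring
  -- ratio tends to 1
  have hB : Tendsto (fun θ => (1 + u' θ ^ 2) / (1 - 3 * u' θ ^ 2)) (𝓝[Set.Ioo 0 δ] 0)
      (𝓝 1) := by
    have hnum : Tendsto (fun θ => 1 + u' θ ^ 2) (𝓝[Set.Ioo 0 δ] 0) (𝓝 (1 + 0)) :=
      (tendsto_const_nhds (x := (1:ℝ))).add hsq
    have hden : Tendsto (fun θ => 1 - 3 * u' θ ^ 2) (𝓝[Set.Ioo 0 δ] 0) (𝓝 (1 - 3 * 0)) :=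
      (tendsto_const_nhds (x := (1:ℝ))).sub (hsq.const_mul 3)
    have h := hnum.div hden (by norm_num)
    convert h using 2 <;> norm_num
  -- LHS tendsto 2 * u'' 0
  have hLHS : Tendsto (fun θ => u'' θ +
      Real.cos θ / Real.sin θ * u' θ * ((1 + u' θ ^ 2) / (1 - 3 * u' θ ^ 2)))
      (𝓝[Set.Ioo 0 δ] 0) (𝓝 (u'' 0 + u'' 0 * 1)) := hT2.add (hA.mul hB)
  -- RHS tendsto -1
  have hRHS : Tendsto (fun θ => (1 + u' θ ^ 2) * (u' θ ^ 2 - 1) / (1 - 3 * u' θ ^ 2))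
      (𝓝[Set.Ioo 0 δ] 0) (𝓝 ((1 + 0) * (0 - 1) / (1 - 3 * 0))) := by
    have hnum : Tendsto (fun θ => (1 + u' θ ^ 2) * (u' θ ^ 2 - 1)) (𝓝[Set.Ioo 0 δ] 0)
        (𝓝 ((1 + 0) * (0 - 1))) :=
      ((tendsto_const_nhds (x := (1:ℝ))).add hsq).mul (hsq.sub (tendsto_const_nhds (x := (1:ℝ))))
    have hden : Tendsto (fun θ => 1 - 3 * u' θ ^ 2) (𝓝[Set.Ioo 0 δ] 0) (𝓝 (1 - 3 * 0)) :=
      (tendsto_const_nhds (x := (1:ℝ))).sub (hsq.const_mul 3)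
    exact hnum.div hden (by norm_num)
  have hEq : Tendsto (fun θ => u'' θ +
      Real.cos θ / Real.sin θ * u' θ * ((1 + u' θ ^ 2) / (1 - 3 * u' θ ^ 2)))
      (𝓝[Set.Ioo 0 δ] 0) (𝓝 ((1 + 0) * (0 - 1) / (1 - 3 * 0))) := by
    refine hRHS.congr' ?_
    filter_upwards [self_mem_nhdsWithin] with θ hθ
    exact (heq θ hθ).symm
  have := tendsto_nhds_unique hLHS hEq
  norm_num at this
  linarith
end

section
/- Let 0 < R < π, H > 0, 0 ≤ θ₀ < R, and 0 ≤ h < H. Set k = h/(R−θ₀) and K = H/(R−θ₀). Then the incompressible-flow resistance of the radial frustum cone of height h is strictly larger than that of height H: 2π ∫₀^{θ₀} e^{−2h} sin θ dθ + 2π ∫_{θ₀}^R e^{−2k(R−θ)} sin θ/(1 + k²) dθ > 2π ∫₀^{θ₀} e^{−2H} sin θ dθ + 2π ∫_{θ₀}^R e^{−2K(R−θ)} sin θ/(1 + K²) dθ, provided θ₀ > 0 or θ₀ < R (the two integrands are compared pointwise since e^{−2k(R−θ)}/(1+k²) > e^{−2K(R−θ)}/(1+K²) for θ ∈ [θ₀,R)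 when k < K). -/
open Real Filter Set

/-- In the incompressible source flow model, the resistance of the radial frustum cone
of base angular radius `R`, truncation angle `θ₀` and height `h` (with slope
`k = h/(R−θ₀)`) is strictly decreasing in the height: for `0 ≤ h < H`, the frustum of
height `h` has strictly larger resistance than the frustum of height `H`. -/
theorem stmt_18 (R H θ₀ h k K : ℝ) (hR0 : 0 < R) (hRpi : R < π) (hH : 0 < H)
    (hθ0 : 0 ≤ θ₀) (hθR : θ₀ < R) (hh : 0 ≤ h) (hhH : h < H)
    (hk : k = h / (R - θ₀)) (hK : K = H / (R - θ₀)) :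
    2 * π * (∫ θ in (0:ℝ)..θ₀, Real.exp (-2 * H) * Real.sin θ) +
        2 * π * (∫ θ in θ₀..R,
          Real.exp (-2 * K * (R - θ)) * Real.sin θ / (1 + K ^ 2)) <
      2 * π * (∫ θ in (0:ℝ)..θ₀, Real.exp (-2 * h) * Real.sin θ) +
        2 * π * (∫ θ in θ₀..R,
          Real.exp (-2 * k * (R - θ)) * Real.sin θ / (1 + k ^ 2)) := by
  have hd : 0 < R - θ₀ := by linarith
  have hk0 : 0 ≤ k := by rw [hk]; positivity
  have hkK : k < K := by rw [hk, hK]; exact div_lt_div_of_pos_right hhH hd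
  have hck : Continuous fun θ : ℝ => Real.exp (-2 * k * (R - θ)) * Real.sin θ / (1 + k ^ 2) := by
    have : (1 : ℝ) + k ^ 2 ≠ 0 := by positivity
    continuity
  have hcK : Continuous fun θ : ℝ => Real.exp (-2 * K * (R - θ)) * Real.sin θ / (1 + K ^ 2) := by
    have : (1 : ℝ) + K ^ 2 ≠ 0 := by positivity
    continuity
  have h1 : (∫ θ in (0:ℝ)..θ₀, Real.exp (-2 * H) * Real.sin θ) ≤
      ∫ θ in (0:ℝ)..θ₀, Real.exp (-2 * h) * Real.sin θ := by
    apply intervalIntegral.integral_mono_on hθ0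
    · exact (Continuous.intervalIntegrable (by continuity) _ _)
    · exact (Continuous.intervalIntegrable (by continuity) _ _)
    · intro x hx
      have hs : 0 ≤ Real.sin x :=
        Real.sin_nonneg_of_nonneg_of_le_pi hx.1 (by linarith [hx.2])
      have : Real.exp (-2 * H) ≤ Real.exp (-2 * h) :=
        Real.exp_le_exp.mpr (by linarith)
      exact mul_le_mul_of_nonneg_right this hs
  have h2 : (∫ θ in θ₀..R, Real.exp (-2 * K * (R - θ)) * Real.sin θ / (1 + K ^ 2)) <
      ∫ θ in θ₀..R, Real.exp (-2 * k * (R - θ)) * Real.sin θ / (1 + k ^ 2) := by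
    have hpos : 0 < ∫ θ in θ₀..R,
        (Real.exp (-2 * k * (R - θ)) * Real.sin θ / (1 + k ^ 2)
          - Real.exp (-2 * K * (R - θ)) * Real.sin θ / (1 + K ^ 2)) := by
      apply intervalIntegral.intervalIntegral_pos_of_pos_on
      · exact ((hck.sub hcK).intervalIntegrable _ _)
      · intro x hx
        have hs : 0 < Real.sin x :=
          Real.sin_pos_of_pos_of_lt_pi (lt_of_le_of_lt hθ0 hx.1) (by linarith [hx.2])
        have hRx : 0 < R - x := by linarith [hx.2]
        have he : Real.exp (-2 * K * (R - x)) < Real.exp (-2 * k * (R - x)) := by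
          apply Real.exp_lt_exp.mpr; nlinarith
        have hden : (1 : ℝ) + k ^ 2 < 1 + K ^ 2 := by nlinarith
        have key : Real.exp (-2 * K * (R - x)) * Real.sin x / (1 + K ^ 2) <
            Real.exp (-2 * k * (R - x)) * Real.sin x / (1 + k ^ 2) := by
          rw [div_lt_div_iff₀ (by positivity) (by positivity)]
          nlinarith [mul_lt_mul_of_pos_right he hs,
            Real.exp_pos (-2 * k * (R - x)), Real.exp_pos (-2 * K * (R - x)),
            mul_pos (Real.exp_pos (-2 * k * (R - x))) hs]
        linarith
      · exact hθR
    rw [intervalIntegral.integral_sub (hck.intervalIntegrable _ _)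
      (hcK.intervalIntegrable _ _)] at hpos
    linarith
  have hπ : 0 < 2 * π := by positivity
  nlinarith [mul_le_mul_of_nonneg_left h1 hπ.le, mul_lt_mul_of_pos_left h2 hπ]
end
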